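/- arXiv:1808.04923 — 4 statements merged into one kernel-verified Lean document; each statement's English description precedes it below -/
import Mathlib

section
/- Fix a positive integer n and an integer a with 0 < a ≤ n. Set i = ⌊n/a⌋, let d be the largest divisor of a all of whose prime factors are at most i, let ℓ = a/d, and set t = ⌊n/ℓ⌋. Then the map x ↦ ℓ·x is a graph isomorphism from the connected component of d in the divisor graph of {d, d+1, …, t} onto the connected component of a in the divisor graph of {a, a+1, …, n}, sending the vertex d to the vertex a. -/
/-- The divisor graph of a finite set `T` of natural numbers: vertices are elements of
`T`, and two distinct vertices are adjacent iff one divides the other. -/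
def divisorGraph (T : Finset ℕ) : SimpleGraph {x : ℕ // x ∈ T} where
  Adj x y := (x : ℕ) ≠ (y : ℕ) ∧ ((x : ℕ) ∣ (y : ℕ) ∨ (y : ℕ) ∣ (x : ℕ))
  symm := ⟨fun _ _ h => ⟨h.1.symm, h.2.symm⟩⟩
  loopless := ⟨fun _ h => h.1 rfl⟩

/-- The connected component of the vertex `v` in the divisor graph of `T`, viewed as the
induced subgraph on the set of vertices reachable from `v`. -/
def componentGraph (T : Finset ℕ) (v : {x : ℕ // x ∈ T}) :
    SimpleGraph {w : {x : ℕ // x ∈ T} | (divisorGraph T).Reachable v w} :=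
  (divisorGraph T).induce {w | (divisorGraph T).Reachable v w}

/-!
Write `a = ℓ d`. By maximality of `d`, every prime factor of `ℓ` exceeds `i = ⌊n/a⌋`.
Multiplication by `ℓ` embeds the divisor graph of `[d, t]` into that of `[a, n]`, and its
image, the multiples of `ℓ` in `[a, n]`, is closed under adjacency: if `y ∣ x` with
`a ≤ y` and `x ≤ n`, the cofactor `x / y` is at most `i`, hence coprime to `ℓ`, so `ℓ ∣ x`
forces `ℓ ∣ y`. An embedding whose image is closed under adjacency restricts to an
isomorphism of connected components.
-/

namespace SimpleGraph.Embedding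

variable {V W : Type*} {H : SimpleGraph V} {G : SimpleGraph W}

theorem exists_reachable_of_reachable (φ : H ↪g G)
    (hclosed : ∀ x y, G.Adj (φ x) y → y ∈ Set.range φ) {v : V} {u : W}
    (hu : G.Reachable (φ v) u) : ∃ w, H.Reachable v w ∧ φ w = u := by
  obtain ⟨p⟩ := hu
  suffices ∀ {u₀ u : W} (_ : G.Walk u₀ u) {w₀ : V}, H.Reachable v w₀ → φ w₀ = u₀ →
      ∃ w, H.Reachable v w ∧ φ w = u from this p .rfl rfl
  intro u₀ u p
  induction p with
  | nil => exact fun hw₀ hφ => ⟨_, hw₀, hφ⟩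
  | cons hadj _ ih =>
    rintro w₀ hw₀ rfl
    obtain ⟨w₁, rfl⟩ := hclosed _ _ hadj
    exact ih (hw₀.trans (φ.map_adj_iff.mp hadj).reachable) rfl

theorem exists_iso_induce_reachable (φ : H ↪g G)
    (hclosed : ∀ x y, G.Adj (φ x) y → y ∈ Set.range φ) {v : V} {u : W} (hvu : φ v = u) :
    ∃ e : H.induce {w | H.Reachable v w} ≃g G.induce {w | G.Reachable u w},
      ∀ w, (e w : W) = φ w := by
  subst hvu
  let f : {w | H.Reachable v w} → {w | G.Reachable (φ v) w} :=
    fun w => ⟨φ w, w.2.map φ.toHom⟩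
  have hf : Function.Bijective f := by
    refine ⟨fun w₁ w₂ h => Subtype.ext (φ.injective (congrArg Subtype.val h)), fun w => ?_⟩
    obtain ⟨w', hw', hφ⟩ := φ.exists_reachable_of_reachable hclosed w.2
    exact ⟨⟨w', hw'⟩, Subtype.ext hφ⟩
  exact ⟨⟨Equiv.ofBijective f hf, φ.map_adj_iff⟩, fun _ => rfl⟩

end SimpleGraph.Embedding

theorem lt_of_prime_dvd_div_of_maximal_smooth {a d i : ℕ} (ha : 0 < a) (hda : d ∣ a)
    (hdsmooth : ∀ p : ℕ, p.Prime → p ∣ d → p ≤ i)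
    (hdmax : ∀ d' : ℕ, d' ∣ a → (∀ p : ℕ, p.Prime → p ∣ d' → p ≤ i) → d' ≤ d)
    {p : ℕ} (hp : p.Prime) (hpℓ : p ∣ a / d) : i < p := by
  by_contra! hpi
  have hd : 0 < d := Nat.pos_of_dvd_of_pos hda ha
  have hdpa : d * p ∣ a := by
    simpa [Nat.mul_div_cancel' hda] using mul_dvd_mul_left d hpℓ
  have hdp_smooth : ∀ q : ℕ, q.Prime → q ∣ d * p → q ≤ i := by
    intro q hq hqdp
    rcases hq.dvd_mul.mp hqdp with hqd | hqp
    · exact hdsmooth q hq hqd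
    · exact (Nat.prime_dvd_prime_iff_eq hq hp).mp hqp ▸ hpi
  have := hdmax _ hdpa hdp_smooth
  nlinarith [hp.two_le]

theorem dvd_of_dvd_of_dvd_of_prime_gt {ℓ a n x y : ℕ} (hℓ : ∀ p : ℕ, p.Prime → p ∣ ℓ → n / a < p)
    (ha : 0 < a) (hay : a ≤ y) (hx : 0 < x) (hxn : x ≤ n) (hyx : y ∣ x) (hℓx : ℓ ∣ x) :
    ℓ ∣ y := by
  obtain ⟨q, rfl⟩ := hyx
  have hq : 0 < q := Nat.pos_of_mul_pos_left hx
  have hqi : q ≤ n / a := (Nat.le_div_iff_mul_le ha).mpr <| calc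
    q * a ≤ q * y := Nat.mul_le_mul_left q hay
    _ = y * q := mul_comm q y
    _ ≤ n := hxn
  have hcop : ℓ.Coprime q := Nat.coprime_of_dvd fun p hp hpℓ hpq =>
    (hℓ p hp hpℓ).not_ge ((Nat.le_of_dvd hq hpq).trans hqi)
  exact hcop.dvd_of_dvd_mul_right hℓx

def divisorGraph.mulEmbedding {T T' : Finset ℕ} {ℓ : ℕ} (hℓ : ℓ ≠ 0)
    (hmaps : ∀ x ∈ T, ℓ * x ∈ T') : divisorGraph T ↪g divisorGraph T' where
  toFun x := ⟨ℓ * x, hmaps x x.2⟩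
  inj' _ _ h := Subtype.ext (Nat.eq_of_mul_eq_mul_left (Nat.pos_of_ne_zero hℓ)
    (congrArg Subtype.val h))
  map_rel_iff' {x y} := by
    change ℓ * x ≠ ℓ * y ∧ (ℓ * x ∣ ℓ * y ∨ ℓ * y ∣ ℓ * x) ↔
      (x : ℕ) ≠ y ∧ ((x : ℕ) ∣ y ∨ (y : ℕ) ∣ x)
    rw [ne_eq, mul_right_inj' hℓ, Nat.mul_dvd_mul_iff_left (Nat.pos_of_ne_zero hℓ),
      Nat.mul_dvd_mul_iff_left (Nat.pos_of_ne_zero hℓ)]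

theorem divisorGraph.mem_range_mulEmbedding_of_adj {a n d ℓ : ℕ} (ha : 0 < a) (hℓ : ℓ ≠ 0)
    (hℓd : ℓ * d = a) (hrough : ∀ p : ℕ, p.Prime → p ∣ ℓ → n / a < p)
    (hmaps : ∀ x ∈ Finset.Icc d (n / ℓ), ℓ * x ∈ Finset.Icc a n)
    {x : {x : ℕ // x ∈ Finset.Icc d (n / ℓ)}} {y : {y : ℕ // y ∈ Finset.Icc a n}}
    (hadj : (divisorGraph (Finset.Icc a n)).Adj (mulEmbedding hℓ hmaps x) y) :
    y ∈ Set.range (mulEmbedding hℓ hmaps) := by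
  obtain ⟨y, hy⟩ := y
  obtain ⟨-, hdvd⟩ := hadj
  rw [Finset.mem_Icc] at hy
  have hℓx := Finset.mem_Icc.mp (hmaps x x.2)
  have hℓy : ℓ ∣ y := hdvd.elim (dvd_mul_right ℓ x).trans fun hyx =>
    dvd_of_dvd_of_dvd_of_prime_gt hrough ha hy.1 (ha.trans_le hℓx.1) hℓx.2 hyx
      (dvd_mul_right ℓ x)
  obtain ⟨z, rfl⟩ := hℓy
  refine ⟨⟨z, Finset.mem_Icc.mpr ⟨?_, ?_⟩⟩, rfl⟩
  · exact Nat.le_of_mul_le_mul_left (hℓd ▸ hy.1) (Nat.pos_of_ne_zero hℓ)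
  · exact (Nat.le_div_iff_mul_le (Nat.pos_of_ne_zero hℓ)).mpr (mul_comm ℓ z ▸ hy.2)

theorem component_isomorphism_general (n a i d ℓ t : ℕ)
    (ha : 0 < a)
    (hi : i = n / a)
    (hda : d ∣ a) (hdsmooth : ∀ p : ℕ, p.Prime → p ∣ d → p ≤ i)
    (hdmax : ∀ d' : ℕ, d' ∣ a → (∀ p : ℕ, p.Prime → p ∣ d' → p ≤ i) → d' ≤ d)
    (hℓ : ℓ = a / d) (ht : t = n / ℓ)
    (hdt : d ∈ Finset.Icc d t) (han' : a ∈ Finset.Icc a n) :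
    ∃ e : componentGraph (Finset.Icc d t) ⟨d, hdt⟩ ≃g
          componentGraph (Finset.Icc a n) ⟨a, han'⟩,
      ∀ v, ((e v).1.1 : ℕ) = ℓ * (v.1.1 : ℕ) := by
  subst hi ht
  have hℓd : ℓ * d = a := hℓ ▸ Nat.div_mul_cancel hda
  have hℓ0 : 0 < ℓ := Nat.pos_of_mul_pos_right (hℓd ▸ ha)
  have hrough : ∀ p : ℕ, p.Prime → p ∣ ℓ → n / a < p := fun p hp hpℓ =>
    lt_of_prime_dvd_div_of_maximal_smooth ha hda hdsmooth hdmax hp (hℓ ▸ hpℓ)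
  have hmaps : ∀ x ∈ Finset.Icc d (n / ℓ), ℓ * x ∈ Finset.Icc a n := by
    intro x hx
    rw [Finset.mem_Icc] at hx ⊢
    exact ⟨hℓd ▸ Nat.mul_le_mul_left ℓ hx.1,
      (Nat.mul_le_mul_left ℓ hx.2).trans (Nat.mul_div_le n ℓ)⟩
  obtain ⟨e, he⟩ := (divisorGraph.mulEmbedding hℓ0.ne' hmaps).exists_iso_induce_reachable
    (fun _ _ => divisorGraph.mem_range_mulEmbedding_of_adj ha hℓ0.ne' hℓd hrough hmaps)
    (v := ⟨d, hdt⟩) (u := ⟨a, han'⟩) (Subtype.ext hℓd)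
  exact ⟨e, fun v => congrArg Subtype.val (he v)⟩

/-- With `i = ⌊n/a⌋`, `d` the largest `i`-smooth divisor of `a`, `ℓ = a/d` and
`t = ⌊n/ℓ⌋`, the map `x ↦ ℓ·x` is a graph isomorphism from the connected component of
`d` in the divisor graph of `{d, …, t}` onto the connected component of `a` in the
divisor graph of `{a, …, n}` (sending the vertex `d` to the vertex `a`). -/
theorem component_isomorphism (n a i d ℓ t : ℕ)
    (ha : 0 < a) (han : a ≤ n)
    (hi : i = n / a)
    (hda : d ∣ a) (hdsmooth : ∀ p : ℕ, p.Prime → p ∣ d → p ≤ i)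
    (hdmax : ∀ d' : ℕ, d' ∣ a → (∀ p : ℕ, p.Prime → p ∣ d' → p ≤ i) → d' ≤ d)
    (hℓ : ℓ = a / d) (ht : t = n / ℓ)
    (hdt : d ∈ Finset.Icc d t) (han' : a ∈ Finset.Icc a n) :
    ∃ e : componentGraph (Finset.Icc d t) ⟨d, hdt⟩ ≃g
          componentGraph (Finset.Icc a n) ⟨a, han'⟩,
      ∀ v, ((e v).1.1 : ℕ) = ℓ * (v.1.1 : ℕ) :=
  component_isomorphism_general n a i d ℓ t ha hi hda hdsmooth hdmax hℓ ht hdt han'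
end

section
/- Let p be a prime and let d and t be positive integers with d ≤ t. Suppose that every integer in the connected component of p·d in the divisor graph of {p·d, p·d+1, …, p·t} is divisible by p. Then every integer in the connected component of p²·d in the divisor graph of {p²·d, p²·d+1, …, p²·t} is divisible by p². -/
/-!
Walk outwards from `p²d` in the divisor graph of `[p²d, p²t]`. Every vertex reached has the form
`p²k` with `pk` in the component of `pd` in the divisor graph of `[pd, pt]`. A neighbour `u` of
such a vertex that divides it but is not divisible by `p²` would have `p`-free part `c` with
`pd ≤ c`, `c ∣ k`, so `c` lies in the component of `pk` (it divides `pk`), yet `p ∤ c`. Hence every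
neighbour is some `p²k'` with `k ∣ k'` or `k' ∣ k`, and then `pk'` equals or is adjacent to `pk`. The
argument works verbatim for `pⁿ` in place of `p²`.
-/

open Finset

lemma mul_mem_Icc_mul_iff {n a d t : ℕ} (hn : 0 < n) :
    n * a ∈ Icc (n * d) (n * t) ↔ a ∈ Icc d t := by
  simp only [mem_Icc, Nat.mul_le_mul_left_iff hn]

lemma divisorGraph_reachable_of_dvd {T : Finset ℕ} {x y : ℕ} (hx : x ∈ T) (hy : y ∈ T)
    (hxy : x ∣ y) : (divisorGraph T).Reachable ⟨x, hx⟩ ⟨y, hy⟩ := by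
  by_cases hne : x = y
  · subst hne
    rfl
  · exact SimpleGraph.Adj.reachable ⟨hne, Or.inl hxy⟩

lemma Nat.Prime.pow_dvd_of_dvd_pow_mul {p n u k d : ℕ} (hp : p.Prime) (hu : u ∣ p ^ n * k)
    (hdu : p ^ n * d ≤ u) (hk : ∀ c, c ∣ k → p * d ≤ c → p ∣ c) : p ^ n ∣ u := by
  obtain _ | m := n
  · exact one_dvd u
  by_contra hndvd
  have hu0 : u ≠ 0 := by
    rintro rfl
    exact hndvd (dvd_zero _)
  set c := ordCompl[p] u
  have he : u.factorization p ≤ m := by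
    by_contra! he
    exact hndvd ((hp.pow_dvd_iff_le_factorization hu0).mpr he)
  have hdc : p * d ≤ c := by
    have : p ^ m * (p * d) ≤ p ^ m * c :=
      calc p ^ m * (p * d) = p ^ (m + 1) * d := by ring
        _ ≤ u := hdu
        _ = ordProj[p] u * c := (Nat.ordProj_mul_ordCompl_eq_self u p).symm
        _ ≤ p ^ m * c := Nat.mul_le_mul_right c (Nat.pow_le_pow_right hp.pos he)
    exact (Nat.mul_le_mul_left_iff (pow_pos hp.pos m)).mp this
  have hck : c ∣ k :=
    ((Nat.coprime_ordCompl hp hu0).symm.pow_right (m + 1)).dvd_of_dvd_mul_left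
      ((Nat.ordCompl_dvd u p).trans hu)
  exact Nat.not_dvd_ordCompl hp hu0 (hk c hck hdc)

lemma exists_eq_pow_mul_of_reachable {p d t : ℕ} (hp : p.Prime) (hd : 0 < d) (n : ℕ)
    (hmem : p * d ∈ Icc (p * d) (p * t))
    (hmemn : p ^ n * d ∈ Icc (p ^ n * d) (p ^ n * t))
    (h : ∀ x : {x : ℕ // x ∈ Icc (p * d) (p * t)},
      (divisorGraph (Icc (p * d) (p * t))).Reachable ⟨p * d, hmem⟩ x → p ∣ (x : ℕ))
    {x : {x : ℕ // x ∈ Icc (p ^ n * d) (p ^ n * t)}}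
    (hx : (divisorGraph (Icc (p ^ n * d) (p ^ n * t))).Reachable ⟨p ^ n * d, hmemn⟩ x) :
    ∃ k, ∃ hk : p * k ∈ Icc (p * d) (p * t), (x : ℕ) = p ^ n * k ∧
      (divisorGraph (Icc (p * d) (p * t))).Reachable ⟨p * d, hmem⟩ ⟨p * k, hk⟩ := by
  have hpn : 0 < p ^ n := pow_pos hp.pos n
  rw [SimpleGraph.reachable_iff_reflTransGen] at hx
  induction hx with
  | refl => exact ⟨d, hmem, rfl, .rfl⟩
  | @tail v u _ hvu ih =>
    obtain ⟨k, hk, hv, hreach⟩ := ih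
    obtain ⟨hdk, hkt⟩ := mem_Icc.mp ((mul_mem_Icc_mul_iff hp.pos).mp hk)
    have hk_div : ∀ c, c ∣ k → p * d ≤ c → p ∣ c := fun c hck hdc => by
      have hct : c ≤ p * t :=
        (Nat.le_of_dvd (hd.trans_le hdk) hck).trans (hkt.trans (Nat.le_mul_of_pos_left t hp.pos))
      exact h ⟨c, mem_Icc.mpr ⟨hdc, hct⟩⟩
        (hreach.trans (divisorGraph_reachable_of_dvd _ hk (hck.mul_left p)).symm)
    have hdvd : p ^ n ∣ (u : ℕ) := by
      rcases hvu.2 with hvu | huv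
      · exact (hv ▸ Dvd.intro k rfl).trans hvu
      · exact hp.pow_dvd_of_dvd_pow_mul (hv ▸ huv) (mem_Icc.mp u.2).1 hk_div
    obtain ⟨k', hu⟩ := hdvd
    have hk' : p * k' ∈ Icc (p * d) (p * t) :=
      (mul_mem_Icc_mul_iff hp.pos).mpr ((mul_mem_Icc_mul_iff hpn).mp (hu ▸ u.2))
    refine ⟨k', hk', hu, hreach.trans ?_⟩
    rcases hvu.2 with hvu | huv
    · rw [hv, hu, Nat.mul_dvd_mul_iff_left hpn] at hvu
      exact divisorGraph_reachable_of_dvd hk hk' (Nat.mul_dvd_mul_left p hvu)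
    · rw [hv, hu, Nat.mul_dvd_mul_iff_left hpn] at huv
      exact (divisorGraph_reachable_of_dvd hk' hk (Nat.mul_dvd_mul_left p huv)).symm

theorem component_prime_power_divisibility_general (p d t : ℕ) (hp : p.Prime)
    (hd : 0 < d)
    (hmem : p * d ∈ Finset.Icc (p * d) (p * t))
    (hmem2 : p ^ 2 * d ∈ Finset.Icc (p ^ 2 * d) (p ^ 2 * t))
    (h : ∀ x : {x : ℕ // x ∈ Finset.Icc (p * d) (p * t)},
      (divisorGraph (Finset.Icc (p * d) (p * t))).Reachable ⟨p * d, hmem⟩ x →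
        p ∣ (x : ℕ)) :
    ∀ x : {x : ℕ // x ∈ Finset.Icc (p ^ 2 * d) (p ^ 2 * t)},
      (divisorGraph (Finset.Icc (p ^ 2 * d) (p ^ 2 * t))).Reachable ⟨p ^ 2 * d, hmem2⟩ x →
        p ^ 2 ∣ (x : ℕ) := by
  intro x hx
  obtain ⟨k, -, hxk, -⟩ := exists_eq_pow_mul_of_reachable hp hd 2 hmem hmem2 h hx
  exact Dvd.intro k hxk.symm

/-- If every integer in the connected component of `p·d` in the divisor graph of
`{p·d, …, p·t}` is divisible by `p`, then every integer in the connected component of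
`p²·d` in the divisor graph of `{p²·d, …, p²·t}` is divisible by `p²`. -/
theorem component_prime_power_divisibility (p d t : ℕ) (hp : p.Prime)
    (hd : 0 < d) (hdt : d ≤ t)
    (hmem : p * d ∈ Finset.Icc (p * d) (p * t))
    (hmem2 : p ^ 2 * d ∈ Finset.Icc (p ^ 2 * d) (p ^ 2 * t))
    (h : ∀ x : {x : ℕ // x ∈ Finset.Icc (p * d) (p * t)},
      (divisorGraph (Finset.Icc (p * d) (p * t))).Reachable ⟨p * d, hmem⟩ x →
        p ∣ (x : ℕ)) :
    ∀ x : {x : ℕ // x ∈ Finset.Icc (p ^ 2 * d) (p ^ 2 * t)},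
      (divisorGraph (Finset.Icc (p ^ 2 * d) (p ^ 2 * t))).Reachable ⟨p ^ 2 * d, hmem2⟩ x →
        p ^ 2 ∣ (x : ℕ) :=
  component_prime_power_divisibility_general p d t hp hd hmem hmem2 h
end

section
/- For all integers 1 ≤ k ≤ n, the number of primitive subsets of {k, k+1, …, n} of maximum possible size (among primitive subsets of {k, …, n}) is at least the number of primitive subsets of {k+1, …, n} of maximum possible size (among primitive subsets of {k+1, …, n}), and at most twice that number. -/
/-- A finite set of positive integers is primitive if no element divides another. -/
def IsPrimitive (S : Finset ℕ) : Prop := ∀ a ∈ S, ∀ b ∈ S, a ∣ b → a = b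

/-- The maximum possible size of a primitive subset of the finite set `T`. -/
noncomputable def maxPrimSize (T : Finset ℕ) : ℕ :=
  sSup {k : ℕ | ∃ S : Finset ℕ, S ⊆ T ∧ IsPrimitive S ∧ S.card = k}

/-- The number of primitive subsets of `T` of maximum possible size. -/
noncomputable def maxPrimCount (T : Finset ℕ) : ℕ :=
  Nat.card {S : Finset ℕ // S ⊆ T ∧ IsPrimitive S ∧ S.card = maxPrimSize T}

/-!
Let `T = {k, …, n}` and `T' = T \ {k}`. If `n < 2k`, then `k` neither divides nor is divided by
any other element of `T`, so the maximum primitive subsets of `T` are exactly those of `T'` with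
`k` added. If `2k ≤ n`, the only divisors of `2k` in `T` are `k` and `2k`, so in a primitive
subset of `T` the element `k` can be exchanged for `2k`. Hence both maximum sizes agree, every
maximum primitive subset of `T'` is one of `T`, and the maximum primitive subsets of `T` avoiding
`k` (kept as they are) and those containing `k` (after the exchange) each inject into those of `T'`.
-/

open Finset

theorem Finset.injOn_insert_erase {α : Type*} [DecidableEq α] (a b : α) :
    Set.InjOn (fun S : Finset α => insert b (S.erase a)) {S | a ∈ S ∧ b ∉ S} := by
  rintro S ⟨haS, hbS⟩ R ⟨haR, hbR⟩ h
  have h' : S.erase a = R.erase a := by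
    simpa [erase_insert fun h => hbS (mem_of_mem_erase h),
      erase_insert fun h => hbR (mem_of_mem_erase h)] using congrArg (·.erase b) h
  rw [← insert_erase haS, ← insert_erase haR, h']

theorem Finset.card_insert_erase {α : Type*} [DecidableEq α] {S : Finset α} {a b : α}
    (haS : a ∈ S) (hbS : b ∉ S) : (insert b (S.erase a)).card = S.card := by
  rw [card_insert_of_notMem fun h => hbS (mem_of_mem_erase h), card_erase_add_one haS]

section Primitive

variable {S R : Finset ℕ} {a b : ℕ}

theorem IsPrimitive.empty : IsPrimitive ∅ := by simp [IsPrimitive]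

theorem IsPrimitive.mono (hS : IsPrimitive S) (hR : R ⊆ S) : IsPrimitive R :=
  fun a ha b hb => hS a (hR ha) b (hR hb)

theorem IsPrimitive.insert (hS : IsPrimitive S) (ha : ∀ x ∈ S, a ∣ x ∨ x ∣ a → x = a) :
    IsPrimitive (insert a S) := by
  intro x hx y hy hxy
  rcases mem_insert.1 hx with rfl | hxS <;> rcases mem_insert.1 hy with rfl | hyS
  · rfl
  · exact (ha y hyS (.inl hxy)).symm
  · exact ha x hxS (.inr hxy)
  · exact hS x hxS y hyS hxy

theorem IsPrimitive.notMem_of_dvd (hS : IsPrimitive S) (haS : a ∈ S) (hab : a ∣ b) (hne : a ≠ b) :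
    b ∉ S :=
  fun hbS => hne (hS a haS b hbS hab)

theorem isPrimitive_insert_erase {T : Finset ℕ} (hS : IsPrimitive S) (hST : S ⊆ T) (haS : a ∈ S)
    (hab : a ∣ b) (hb : ∀ x ∈ T, x ∣ b → x = a ∨ x = b) :
    IsPrimitive (insert b (S.erase a)) := by
  refine (hS.mono (erase_subset a S)).insert fun x hx hdvd => ?_
  obtain ⟨hxa, hxS⟩ := mem_erase.1 hx
  rcases hdvd with hbx | hxb
  · exact absurd (hS a haS x hxS (hab.trans hbx)).symm hxa
  · exact (hb x (hST hxS) hxb).resolve_left hxa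

end Primitive

section MaxPrim

variable {T T' S : Finset ℕ}

theorem bddAbove_primitive_cards (T : Finset ℕ) :
    BddAbove {k : ℕ | ∃ S : Finset ℕ, S ⊆ T ∧ IsPrimitive S ∧ S.card = k} :=
  ⟨T.card, fun _ ⟨_, hST, _, hS⟩ => hS ▸ card_le_card hST⟩

theorem card_le_maxPrimSize (hST : S ⊆ T) (hS : IsPrimitive S) : S.card ≤ maxPrimSize T :=
  le_csSup (bddAbove_primitive_cards T) ⟨S, hST, hS, rfl⟩

theorem exists_isPrimitive_card_eq_maxPrimSize (T : Finset ℕ) :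
    ∃ S ⊆ T, IsPrimitive S ∧ S.card = maxPrimSize T :=
  Nat.sSup_mem (s := {k | ∃ S ⊆ T, IsPrimitive S ∧ S.card = k})
    ⟨0, ∅, empty_subset T, .empty, rfl⟩ (bddAbove_primitive_cards T)

theorem maxPrimSize_mono (hT : T' ⊆ T) : maxPrimSize T' ≤ maxPrimSize T := by
  obtain ⟨S, hST, hS, hcard⟩ := exists_isPrimitive_card_eq_maxPrimSize T'
  exact hcard ▸ card_le_maxPrimSize (hST.trans hT) hS

open Classical in
noncomputable def maxPrimSets (T : Finset ℕ) : Finset (Finset ℕ) :=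
  T.powerset.filter fun S => IsPrimitive S ∧ S.card = maxPrimSize T

theorem mem_maxPrimSets :
    S ∈ maxPrimSets T ↔ S ⊆ T ∧ IsPrimitive S ∧ S.card = maxPrimSize T := by
  simp [maxPrimSets]

theorem maxPrimCount_eq_card_maxPrimSets (T : Finset ℕ) :
    maxPrimCount T = (maxPrimSets T).card := by
  rw [maxPrimCount, ← Nat.card_eq_finsetCard]
  exact Nat.card_congr (Equiv.subtypeEquivRight fun _ => mem_maxPrimSets.symm)

theorem maxPrimCount_le_of_subset (hT : T' ⊆ T) (hm : maxPrimSize T' = maxPrimSize T) :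
    maxPrimCount T' ≤ maxPrimCount T := by
  simp only [maxPrimCount_eq_card_maxPrimSets]
  refine card_le_card fun S hS => ?_
  obtain ⟨hST, hS, hcard⟩ := mem_maxPrimSets.1 hS
  exact mem_maxPrimSets.2 ⟨hST.trans hT, hS, hcard.trans hm⟩

end MaxPrim

section Isolated

variable {T S : Finset ℕ} {a : ℕ}

theorem maxPrimSize_eq_erase_add_one_of_isolated (haT : a ∈ T)
    (ha : ∀ x ∈ T, a ∣ x ∨ x ∣ a → x = a) :
    maxPrimSize T = maxPrimSize (T.erase a) + 1 := by
  apply le_antisymm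
  · obtain ⟨S, hST, hS, hcard⟩ := exists_isPrimitive_card_eq_maxPrimSize T
    have := card_le_maxPrimSize (erase_subset_erase a hST) (hS.mono (erase_subset a S))
    have := pred_card_le_card_erase (s := S) (a := a)
    omega
  · obtain ⟨S, hST, hS, hcard⟩ := exists_isPrimitive_card_eq_maxPrimSize (T.erase a)
    obtain ⟨hST, haS⟩ := subset_erase.1 hST
    rw [← hcard, ← card_insert_of_notMem haS]
    exact card_le_maxPrimSize (insert_subset haT hST) (hS.insert fun x hx => ha x (hST hx))

theorem mem_of_mem_maxPrimSets_of_isolated (haT : a ∈ T) (ha : ∀ x ∈ T, a ∣ x ∨ x ∣ a → x = a)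
    (hS : S ∈ maxPrimSets T) : a ∈ S := by
  obtain ⟨hST, hS, hcard⟩ := mem_maxPrimSets.1 hS
  by_contra haS
  have := card_le_maxPrimSize (subset_erase.2 ⟨hST, haS⟩) hS
  have := maxPrimSize_eq_erase_add_one_of_isolated haT ha
  omega

theorem maxPrimCount_erase_of_isolated (haT : a ∈ T) (ha : ∀ x ∈ T, a ∣ x ∨ x ∣ a → x = a) :
    maxPrimCount (T.erase a) = maxPrimCount T := by
  have hsize := maxPrimSize_eq_erase_add_one_of_isolated haT ha
  simp only [maxPrimCount_eq_card_maxPrimSets]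
  refine card_nbij' (insert a) (·.erase a) (fun S hS => ?_) (fun S hS => ?_)
    (fun S hS => erase_insert (subset_erase.1 (mem_maxPrimSets.1 hS).1).2)
    (fun S hS => insert_erase (mem_of_mem_maxPrimSets_of_isolated haT ha hS))
  · obtain ⟨hST, hS, hcard⟩ := mem_maxPrimSets.1 hS
    obtain ⟨hST, haS⟩ := subset_erase.1 hST
    refine mem_maxPrimSets.2 ⟨insert_subset haT hST, hS.insert fun x hx => ha x (hST hx), ?_⟩
    rw [card_insert_of_notMem haS, hcard, hsize]
  · have haS := mem_of_mem_maxPrimSets_of_isolated haT ha hS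
    obtain ⟨hST, hS, hcard⟩ := mem_maxPrimSets.1 hS
    refine mem_maxPrimSets.2 ⟨erase_subset_erase a hST, hS.mono (erase_subset a S), ?_⟩
    rw [card_erase_of_mem haS, hcard, hsize, Nat.add_sub_cancel]

end Isolated

section Swap

variable {T S : Finset ℕ} {a b : ℕ}

theorem maxPrimSize_erase_of_swap (hbT : b ∈ T) (hab : a ∣ b) (hne : a ≠ b)
    (hb : ∀ x ∈ T, x ∣ b → x = a ∨ x = b) :
    maxPrimSize (T.erase a) = maxPrimSize T := by
  refine le_antisymm (maxPrimSize_mono (erase_subset a T)) ?_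
  obtain ⟨S, hST, hS, hcard⟩ := exists_isPrimitive_card_eq_maxPrimSize T
  by_cases haS : a ∈ S
  · rw [← hcard, ← card_insert_erase haS (hS.notMem_of_dvd haS hab hne)]
    exact card_le_maxPrimSize (insert_subset (mem_erase.2 ⟨hne.symm, hbT⟩)
      (erase_subset_erase a hST)) (isPrimitive_insert_erase hS hST haS hab hb)
  · exact hcard ▸ card_le_maxPrimSize (subset_erase.2 ⟨hST, haS⟩) hS

theorem maxPrimCount_le_two_mul_erase_of_swap (hbT : b ∈ T) (hab : a ∣ b) (hne : a ≠ b)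
    (hb : ∀ x ∈ T, x ∣ b → x = a ∨ x = b) :
    maxPrimCount T ≤ 2 * maxPrimCount (T.erase a) := by
  have hsize := maxPrimSize_erase_of_swap hbT hab hne hb
  simp only [maxPrimCount_eq_card_maxPrimSets]
  rw [← card_filter_add_card_filter_not (s := maxPrimSets T) (a ∈ ·), two_mul]
  refine add_le_add ?_ ?_
  · refine card_le_card_of_injOn (fun S : Finset ℕ => insert b (S.erase a)) (fun S hS => ?_) ?_
    · obtain ⟨hS, haS⟩ := mem_filter.1 hS
      obtain ⟨hST, hS, hcard⟩ := mem_maxPrimSets.1 hS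
      refine mem_maxPrimSets.2 ⟨insert_subset (mem_erase.2 ⟨hne.symm, hbT⟩)
        (erase_subset_erase a hST), isPrimitive_insert_erase hS hST haS hab hb, ?_⟩
      rw [card_insert_erase haS (hS.notMem_of_dvd haS hab hne), hcard, hsize]
    · refine (injOn_insert_erase a b).mono fun S hS => ?_
      obtain ⟨hS, haS⟩ := mem_filter.1 hS
      exact ⟨haS, (mem_maxPrimSets.1 hS).2.1.notMem_of_dvd haS hab hne⟩
  · refine card_le_card fun S hS => ?_
    obtain ⟨hS, haS⟩ := mem_filter.1 hS
    obtain ⟨hST, hS, hcard⟩ := mem_maxPrimSets.1 hS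
    exact mem_maxPrimSets.2 ⟨subset_erase.2 ⟨hST, haS⟩, hS, hcard.trans hsize.symm⟩

end Swap

/-- The number of maximum-size primitive subsets of `{k, …, n}` is at least the number
of maximum-size primitive subsets of `{k+1, …, n}` and at most twice that number. -/
theorem maxPrimCount_step (k n : ℕ) (hk : 1 ≤ k) (hkn : k ≤ n) :
    maxPrimCount (Finset.Icc (k + 1) n) ≤ maxPrimCount (Finset.Icc k n) ∧
    maxPrimCount (Finset.Icc k n) ≤ 2 * maxPrimCount (Finset.Icc (k + 1) n) := by
  have hIcc : Icc (k + 1) n = (Icc k n).erase k := by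
    ext x
    simp only [mem_Icc, mem_erase]
    omega
  rw [hIcc]
  rcases lt_or_ge n (2 * k) with hn | hn
  · have hisolated : ∀ x ∈ Icc k n, k ∣ x ∨ x ∣ k → x = k := by
      intro x hx hdvd
      rw [mem_Icc] at hx
      rcases hdvd with hkx | hxk
      · exact Nat.eq_of_dvd_of_lt_two_mul (by omega) hkx (by omega)
      · exact le_antisymm (Nat.le_of_dvd hk hxk) hx.1
    rw [maxPrimCount_erase_of_isolated (mem_Icc.2 ⟨le_rfl, hkn⟩) hisolated]
    omega
  · have h2kT : 2 * k ∈ Icc k n := mem_Icc.2 ⟨by omega, hn⟩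
    have hne : k ≠ 2 * k := by omega
    have hdivisors : ∀ x ∈ Icc k n, x ∣ 2 * k → x = k ∨ x = 2 * k := by
      intro x hx hx2k
      rcases (mem_Icc.1 hx).1.eq_or_lt with rfl | hkx
      · exact .inl rfl
      · exact .inr (Nat.eq_of_dvd_of_lt_two_mul (by omega) hx2k (by omega)).symm
    exact ⟨maxPrimCount_le_of_subset (erase_subset k _)
        (maxPrimSize_erase_of_swap h2kT (dvd_mul_left k 2) hne hdivisors),
      maxPrimCount_le_two_mul_erase_of_swap h2kT (dvd_mul_left k 2) hne hdivisors⟩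
end

section
/- For integers 1 ≤ k < n, let V(k,n) denote the minimum number of vertex-disjoint paths in the divisor graph of {k, k+1, …, n} needed so that every vertex lies on one of the paths. Then |V(k,n) − V(k+1,n)| ≤ 1; moreover, if 2k ≤ n then V(k,n) ≤ V(k+1,n). -/
/-- The minimum number of vertex-disjoint paths (represented as nonempty duplicate-free
lists of vertices, consecutive vertices adjacent) needed to cover every vertex of `G`. -/
noncomputable def pathCoverNumber {V : Type*} (G : SimpleGraph V) : ℕ :=
  sInf {m : ℕ | ∃ L : Finset (List V), L.card = m ∧
    (∀ l ∈ L, l ≠ [] ∧ l.Chain' G.Adj ∧ l.Nodup) ∧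
    (∀ l ∈ L, ∀ l' ∈ L, l ≠ l' → ∀ x ∈ l, x ∉ l') ∧
    (∀ v : V, ∃ l ∈ L, v ∈ l)}

/-!
Deleting `k` from a minimum path cover of `{k, …, n}` cuts the path through `k` into at most
two paths, and adding `[k]` as a path of its own goes back; so the two path cover numbers differ
by at most one. If `2k ≤ n`, then `2k` lies in `{k+1, …, n}`, and its neighbours there are
multiples of `2k` (a divisor of `2k` larger than `k` is `2k` itself), hence multiples of `k`.
So `k` can be inserted into the path through `2k` right before `2k`, and no path is added.
-/

namespace SimpleGraph

variable {α : Type*} (G : SimpleGraph α)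

structure IsPathCover (s : Finset α) (L : Finset (List α)) : Prop where
  ne_nil : ∀ l ∈ L, l ≠ []
  isChain : ∀ l ∈ L, l.IsChain G.Adj
  nodup : ∀ l ∈ L, l.Nodup
  subset : ∀ l ∈ L, ∀ x ∈ l, x ∈ s
  pairwise_disjoint : (L : Set (List α)).Pairwise List.Disjoint
  exists_mem : ∀ x ∈ s, ∃ l ∈ L, x ∈ l

noncomputable def pathCoverNumberOn (s : Finset α) : ℕ :=
  sInf {m | ∃ L, G.IsPathCover s L ∧ L.card = m}

variable {G}

theorem IsPathCover.pathCoverNumberOn_le {s : Finset α} {L : Finset (List α)}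
    (hL : G.IsPathCover s L) : G.pathCoverNumberOn s ≤ L.card :=
  Nat.sInf_le ⟨L, hL, rfl⟩

theorem isPathCover_map_singleton (s : Finset α) :
    G.IsPathCover s (s.map ⟨fun x => [x], List.singleton_injective⟩) where
  ne_nil := by simp
  isChain := by simp
  nodup := by simp
  subset := by simp
  pairwise_disjoint := by
    simp only [Finset.coe_map, Function.Embedding.coeFn_mk]
    rintro _ ⟨x, -, rfl⟩ _ ⟨y, -, rfl⟩ hxy
    simpa [ne_comm] using hxy
  exists_mem x hx := ⟨[x], by simpa using hx, List.mem_singleton_self x⟩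

variable (G) in
theorem pathCoverNumber_induce (s : Finset α) :
    pathCoverNumber (G.induce (s : Set α)) = G.pathCoverNumberOn s := by
  classical
  have hinj : Function.Injective (List.map (Subtype.val : ↥(s : Set α) → α)) :=
    List.map_injective_iff.2 Subtype.val_injective
  unfold pathCoverNumber pathCoverNumberOn
  congr 1; ext m
  constructor
  · rintro ⟨L, rfl, hpath, hdisj, hcov⟩
    refine ⟨L.image (List.map Subtype.val), ⟨?_, ?_, ?_, ?_, ?_, ?_⟩,
      Finset.card_image_of_injective L hinj⟩
    · exact Finset.forall_mem_image.2 fun l hl => mt List.map_eq_nil_iff.1 (hpath l hl).1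
    · exact Finset.forall_mem_image.2 fun l hl => (List.isChain_map _).2 (hpath l hl).2.1
    · exact Finset.forall_mem_image.2 fun l hl => (hpath l hl).2.2.map Subtype.val_injective
    · refine Finset.forall_mem_image.2 fun l _ x hx => ?_
      obtain ⟨v, -, rfl⟩ := List.mem_map.1 hx
      exact v.2
    · rw [Finset.coe_image]
      rintro _ ⟨l, hl, rfl⟩ _ ⟨l', hl', rfl⟩ hne
      exact List.disjoint_map Subtype.val_injective fun x hx hx' =>
        hdisj l hl l' hl' (fun h => hne (h ▸ rfl)) x hx hx'
    · intro x hx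
      obtain ⟨l, hl, hxl⟩ := hcov ⟨x, hx⟩
      exact ⟨_, Finset.mem_image_of_mem _ hl, List.mem_map_of_mem hxl⟩
  · rintro ⟨L, hL, rfl⟩
    lift L to Finset (List (s : Set α)) using hL.subset
    refine ⟨L, (Finset.card_image_of_injective L hinj).symm, fun l hl => ?_, ?_, fun v => ?_⟩
    · have hl' := Finset.mem_image_of_mem (List.map Subtype.val) hl
      exact ⟨mt List.map_eq_nil_iff.2 (hL.ne_nil _ hl'),
        (List.isChain_map Subtype.val).1 (hL.isChain _ hl'), (hL.nodup _ hl').of_map _⟩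
    · intro l hl l' hl' hne x hx hx'
      exact hL.pairwise_disjoint (Finset.mem_image_of_mem _ hl) (Finset.mem_image_of_mem _ hl')
        (hinj.ne hne) (List.mem_map_of_mem hx) (List.mem_map_of_mem hx')
    · obtain ⟨_, hl, hvl⟩ := hL.exists_mem v v.2
      obtain ⟨l, hlL, rfl⟩ := Finset.mem_image.1 hl
      exact ⟨l, hlL, (List.mem_map_of_injective Subtype.val_injective).1 hvl⟩

variable (G) in
theorem exists_isPathCover_card_eq (s : Finset α) :
    ∃ L, G.IsPathCover s L ∧ L.card = G.pathCoverNumberOn s :=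
  Nat.sInf_mem (s := {m | ∃ L, G.IsPathCover s L ∧ L.card = m})
    ⟨_, _, isPathCover_map_singleton s, rfl⟩

section DecidableEq

variable [DecidableEq α]

theorem isPathCover_singleton {l : List α} (hne : l ≠ []) (hl : l.IsChain G.Adj)
    (hnd : l.Nodup) : G.IsPathCover l.toFinset {l} where
  ne_nil := by simpa
  isChain := by simpa
  nodup := by simpa
  subset := by simp
  pairwise_disjoint := by simp
  exists_mem := by simp

theorem isPathCover_pair_erase_nil {A B : List α} {a : α} (hl : (A ++ a :: B).IsChain G.Adj)
    (hnd : (A ++ a :: B).Nodup) :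
    G.IsPathCover (A ++ B).toFinset (({A, B} : Finset (List α)).erase []) where
  ne_nil _ hl := (Finset.mem_erase.1 hl).1
  isChain := by
    have hA := hl.left_of_append
    have hB := hl.right_of_append.tail
    simp only [Finset.mem_erase, Finset.mem_insert, Finset.mem_singleton]
    rintro l ⟨-, rfl | rfl⟩ <;> assumption
  nodup := by
    have hA := hnd.sublist (List.sublist_append_left A (a :: B))
    have hB := hnd.sublist ((List.sublist_cons_self a B).trans (List.sublist_append_right A _))
    simp only [Finset.mem_erase, Finset.mem_insert, Finset.mem_singleton]
    rintro l ⟨-, rfl | rfl⟩ <;> assumption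
  subset := by
    simp only [Finset.mem_erase, Finset.mem_insert, Finset.mem_singleton]
    rintro l ⟨-, rfl | rfl⟩ x hx <;> simp [hx]
  pairwise_disjoint := by
    refine Set.Pairwise.mono (Finset.coe_subset.2 (Finset.erase_subset _ _)) ?_
    rw [Finset.coe_insert, Finset.coe_singleton, Set.pairwise_pair]
    intro _
    have hAB : A.Disjoint B := fun x hxA hxB =>
      (List.nodup_append.1 (List.nodup_middle.1 hnd).of_cons).2.2 x hxA x hxB rfl
    exact ⟨hAB, hAB.symm⟩
  exists_mem x hx := by
    simp only [List.mem_toFinset, List.mem_append] at hx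
    rcases hx with hx | hx
    · exact ⟨A, Finset.mem_erase.2 ⟨List.ne_nil_of_mem hx, by simp⟩, hx⟩
    · exact ⟨B, Finset.mem_erase.2 ⟨List.ne_nil_of_mem hx, by simp⟩, hx⟩

theorem IsPathCover.union {s t : Finset α} {L M : Finset (List α)} (hL : G.IsPathCover s L)
    (hM : G.IsPathCover t M) (hst : Disjoint s t) : G.IsPathCover (s ∪ t) (L ∪ M) where
  ne_nil l hl := (Finset.mem_union.1 hl).elim (hL.ne_nil l) (hM.ne_nil l)
  isChain l hl := (Finset.mem_union.1 hl).elim (hL.isChain l) (hM.isChain l)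
  nodup l hl := (Finset.mem_union.1 hl).elim (hL.nodup l) (hM.nodup l)
  subset l hl x hx := (Finset.mem_union.1 hl).elim
    (fun hl => Finset.mem_union_left t (hL.subset l hl x hx))
    (fun hl => Finset.mem_union_right s (hM.subset l hl x hx))
  pairwise_disjoint := by
    have hLM : ∀ l ∈ L, ∀ m ∈ M, l.Disjoint m := fun l hl m hm x hxl hxm =>
      Finset.disjoint_left.1 hst (hL.subset l hl x hxl) (hM.subset m hm x hxm)
    rw [Finset.coe_union, Set.pairwise_union]
    exact ⟨hL.pairwise_disjoint, hM.pairwise_disjoint,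
      fun l hl m hm _ => ⟨hLM l hl m hm, (hLM l hl m hm).symm⟩⟩
  exists_mem x hx := (Finset.mem_union.1 hx).elim
    (fun hx => (hL.exists_mem x hx).imp fun _ h => ⟨Finset.mem_union_left M h.1, h.2⟩)
    (fun hx => (hM.exists_mem x hx).imp fun _ h => ⟨Finset.mem_union_right L h.1, h.2⟩)

theorem IsPathCover.erase {s : Finset α} {L : Finset (List α)} {l : List α}
    (hL : G.IsPathCover s L) (hl : l ∈ L) : G.IsPathCover (s \ l.toFinset) (L.erase l) where
  ne_nil m hm := hL.ne_nil m (Finset.mem_of_mem_erase hm)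
  isChain m hm := hL.isChain m (Finset.mem_of_mem_erase hm)
  nodup m hm := hL.nodup m (Finset.mem_of_mem_erase hm)
  subset m hm x hx := by
    obtain ⟨hml, hmL⟩ := Finset.mem_erase.1 hm
    exact Finset.mem_sdiff.2 ⟨hL.subset m hmL x hx,
      fun hxl => hL.pairwise_disjoint hmL hl hml hx (List.mem_toFinset.1 hxl)⟩
  pairwise_disjoint := hL.pairwise_disjoint.mono (Finset.coe_subset.2 (Finset.erase_subset l L))
  exists_mem x hx := by
    obtain ⟨hxs, hxl⟩ := Finset.mem_sdiff.1 hx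
    obtain ⟨m, hmL, hxm⟩ := hL.exists_mem x hxs
    exact ⟨m, Finset.mem_erase.2 ⟨fun h => hxl (List.mem_toFinset.2 (h ▸ hxm)), hmL⟩, hxm⟩

theorem IsPathCover.pathCoverNumberOn_sdiff_union_add_one_le {s t : Finset α}
    {L M : Finset (List α)} {l : List α} (hL : G.IsPathCover s L) (hl : l ∈ L)
    (hM : G.IsPathCover t M) (hdisj : Disjoint (s \ l.toFinset) t) :
    G.pathCoverNumberOn (s \ l.toFinset ∪ t) + 1 ≤ L.card + M.card :=
  calc G.pathCoverNumberOn (s \ l.toFinset ∪ t) + 1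
      ≤ (L.erase l ∪ M).card + 1 :=
        Nat.add_le_add_right ((hL.erase hl).union hM hdisj).pathCoverNumberOn_le 1
    _ ≤ (L.erase l).card + 1 + M.card := by grw [Finset.card_union_le]; omega
    _ = L.card + M.card := by rw [Finset.card_erase_add_one hl]

variable (G)

theorem pathCoverNumberOn_le_erase_add_one (s : Finset α) (a : α) :
    G.pathCoverNumberOn s ≤ G.pathCoverNumberOn (s.erase a) + 1 := by
  by_cases ha : a ∉ s
  · rw [Finset.erase_eq_of_notMem ha]; omega
  obtain ⟨L, hL, hcard⟩ := G.exists_isPathCover_card_eq (s.erase a)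
  have hcover := (isPathCover_singleton (G := G) (List.cons_ne_nil a [])
    (List.isChain_singleton a) (List.nodup_singleton a)).union hL (by simp)
  rw [List.toFinset_cons, List.toFinset_nil, insert_empty_eq, ← Finset.insert_eq,
    Finset.insert_erase (not_not.1 ha)] at hcover
  calc G.pathCoverNumberOn s ≤ ({[a]} ∪ L).card := hcover.pathCoverNumberOn_le
    _ ≤ 1 + L.card := Finset.card_union_le _ _
    _ = G.pathCoverNumberOn (s.erase a) + 1 := by rw [hcard, add_comm]

theorem pathCoverNumberOn_erase_le_add_one (s : Finset α) (a : α) :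
    G.pathCoverNumberOn (s.erase a) ≤ G.pathCoverNumberOn s + 1 := by
  by_cases ha : a ∉ s
  · rw [Finset.erase_eq_of_notMem ha]; omega
  obtain ⟨L, hL, hcard⟩ := G.exists_isPathCover_card_eq s
  obtain ⟨l, hl, hal⟩ := hL.exists_mem a (not_not.1 ha)
  obtain ⟨A, B, rfl⟩ := List.append_of_mem hal
  have haAB : a ∉ A ++ B := (List.nodup_cons.1 (List.nodup_middle.1 (hL.nodup _ hl))).1
  have hsplit := isPathCover_pair_erase_nil (hL.isChain _ hl) (hL.nodup _ hl)
  have hdisj : Disjoint (s \ (A ++ a :: B).toFinset) (A ++ B).toFinset := by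
    simp only [Finset.disjoint_left, Finset.mem_sdiff, List.mem_toFinset, List.mem_append,
      List.mem_cons]
    tauto
  have hs : s \ (A ++ a :: B).toFinset ∪ (A ++ B).toFinset = s.erase a := by
    ext x
    have := hL.subset _ hl x
    simp only [List.mem_append, List.mem_cons] at this haAB
    simp only [Finset.mem_union, Finset.mem_sdiff, List.mem_toFinset, List.mem_append,
      List.mem_cons, Finset.mem_erase]
    rcases eq_or_ne x a with rfl | hxa <;> tauto
  have := hL.pathCoverNumberOn_sdiff_union_add_one_le hl hsplit hdisj
  rw [hs] at this
  have := (Finset.card_erase_le (s := {A, B}) (a := [])).trans Finset.card_le_two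
  omega

/-- `a` is inserted just before `b` in the path through `b`: the predecessor of `b`, if any,
is a neighbour of `b` in `s`, hence adjacent to `a`. -/
theorem pathCoverNumberOn_le_erase_of_adj {s : Finset α} {a b : α} (ha : a ∈ s) (hb : b ∈ s)
    (hab : G.Adj a b) (hnbr : ∀ c ∈ s, c ≠ a → G.Adj c b → G.Adj c a) :
    G.pathCoverNumberOn s ≤ G.pathCoverNumberOn (s.erase a) := by
  obtain ⟨L, hL, hcard⟩ := G.exists_isPathCover_card_eq (s.erase a)
  obtain ⟨l, hl, hbl⟩ := hL.exists_mem b (Finset.mem_erase.2 ⟨hab.ne', hb⟩)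
  obtain ⟨A, B, rfl⟩ := List.append_of_mem hbl
  have hal : a ∉ A ++ b :: B := fun h => (Finset.mem_erase.1 (hL.subset _ hl a h)).1 rfl
  have hchain : (A ++ a :: b :: B).IsChain G.Adj := by
    obtain ⟨hA, hbB, hlink⟩ := List.isChain_append.1 (hL.isChain _ hl)
    refine hA.append (hbB.cons_cons hab) fun c hc y hy => ?_
    obtain rfl : y = a := by simpa using hy.symm
    obtain ⟨hca, hcs⟩ :=
      Finset.mem_erase.1 (hL.subset _ hl c (by simp [List.mem_of_getLast? hc]))
    exact hnbr c hcs hca (hlink c hc b rfl)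
  have hpath := isPathCover_singleton (List.append_ne_nil_of_right_ne_nil A (List.cons_ne_nil _ _))
    hchain (List.nodup_middle.2 (List.nodup_cons.2 ⟨hal, hL.nodup _ hl⟩))
  have hdisj : Disjoint (s.erase a \ (A ++ b :: B).toFinset) (A ++ a :: b :: B).toFinset := by
    simp only [Finset.disjoint_left, Finset.mem_sdiff, Finset.mem_erase, List.mem_toFinset,
      List.mem_append, List.mem_cons]
    tauto
  have hs : s.erase a \ (A ++ b :: B).toFinset ∪ (A ++ a :: b :: B).toFinset = s := by
    ext x
    have := hL.subset _ hl x
    simp only [List.mem_append, List.mem_cons, Finset.mem_erase] at this hal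
    simp only [Finset.mem_union, Finset.mem_sdiff, List.mem_toFinset, List.mem_append,
      List.mem_cons, Finset.mem_erase]
    rcases eq_or_ne x a with rfl | hxa <;> tauto
  have := hL.pathCoverNumberOn_sdiff_union_add_one_le hl hpath hdisj
  rw [hs, Finset.card_singleton] at this
  omega

end DecidableEq

end SimpleGraph

abbrev divisibilityGraph : SimpleGraph ℕ := SimpleGraph.fromRel (· ∣ ·)

theorem pathCoverNumber_divisorGraph (T : Finset ℕ) :
    pathCoverNumber (divisorGraph T) = divisibilityGraph.pathCoverNumberOn T :=
  SimpleGraph.pathCoverNumber_induce (G := divisibilityGraph) T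

theorem eq_of_dvd_of_lt_two_mul {c m : ℕ} (hm : 0 < m) (hc : c ∣ m) (hmc : m < 2 * c) :
    c = m := by
  obtain ⟨q, rfl⟩ := hc
  rcases q with _ | _ | q <;> nlinarith

theorem divisibilityGraph_adj_of_adj_two_mul {c k : ℕ} (hk : 0 < k) (hkc : k < c)
    (hc : divisibilityGraph.Adj c (2 * k)) : divisibilityGraph.Adj c k := by
  obtain ⟨hne, hdvd | hdvd⟩ := hc
  · exact absurd (eq_of_dvd_of_lt_two_mul (by omega) hdvd (by omega)) hne
  · exact ⟨hkc.ne', Or.inr ((dvd_mul_left k 2).trans hdvd)⟩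

theorem path_cover_number_step_general (k n : ℕ) (hk : 1 ≤ k) :
    |(pathCoverNumber (divisorGraph (Finset.Icc k n)) : ℤ) -
      (pathCoverNumber (divisorGraph (Finset.Icc (k + 1) n)) : ℤ)| ≤ 1 ∧
    (2 * k ≤ n →
      pathCoverNumber (divisorGraph (Finset.Icc k n)) ≤
        pathCoverNumber (divisorGraph (Finset.Icc (k + 1) n))) := by
  have hIcc : Finset.Icc (k + 1) n = (Finset.Icc k n).erase k := by
    rw [Finset.Icc_erase_left, Finset.Icc_add_one_left_eq_Ioc]
  rw [pathCoverNumber_divisorGraph, pathCoverNumber_divisorGraph, hIcc]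
  have hdel := divisibilityGraph.pathCoverNumberOn_erase_le_add_one (Finset.Icc k n) k
  have hins := divisibilityGraph.pathCoverNumberOn_le_erase_add_one (Finset.Icc k n) k
  refine ⟨abs_sub_le_iff.2 ⟨by omega, by omega⟩, fun h2k => ?_⟩
  refine divisibilityGraph.pathCoverNumberOn_le_erase_of_adj (b := 2 * k)
    (Finset.mem_Icc.2 ⟨le_rfl, by omega⟩) (Finset.mem_Icc.2 ⟨by omega, h2k⟩)
    ⟨by omega, Or.inl (dvd_mul_left k 2)⟩ fun c hc hck hc2k => ?_
  exact divisibilityGraph_adj_of_adj_two_mul hk ((Finset.mem_Icc.1 hc).1.lt_of_ne hck.symm) hc2k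

/-- `V(k,n)`, the minimum number of vertex-disjoint paths covering the divisor graph of
`{k, k+1, …, n}`, satisfies `|V(k,n) − V(k+1,n)| ≤ 1`, and `V(k,n) ≤ V(k+1,n)`
whenever `2k ≤ n`. -/
theorem path_cover_number_step (k n : ℕ) (hk : 1 ≤ k) (hkn : k < n) :
    |(pathCoverNumber (divisorGraph (Finset.Icc k n)) : ℤ) -
      (pathCoverNumber (divisorGraph (Finset.Icc (k + 1) n)) : ℤ)| ≤ 1 ∧
    (2 * k ≤ n →
      pathCoverNumber (divisorGraph (Finset.Icc k n)) ≤
        pathCoverNumber (divisorGraph (Finset.Icc (k + 1) n))) :=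
  path_cover_number_step_general k n hk
end
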